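/- arXiv:2105.07188 — 7 statements merged into one kernel-verified Lean document; each statement's English description precedes it below -/
import Mathlib

section
/- Let α ∈ (0, π/2), θ_d ∈ ℝ, L_d > 0, and ε > 0. Define A = ε²(θ_d² − cos α), B = ε·√(ε²(θ_d² − cos α)² + L_d²), C = A/B, ω̃ = 1 − (1/2)ε²θ_d², and the stance radial motion L(t) = 1 − ε L_d sin(ε⁻¹ ω̃ t) + ε²(θ_d² − cos α)(1 − cos(ε⁻¹ ω̃ t)). Assume ω̃ > 0 and set t_C = (2ε/ω̃)·arccos(C). Then L(0) = 1 and L(t_C) = 1. -/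
open Real

/-! The deviation from rest length is `ε Ld sin x - A (1 - cos x)` with `x = ε⁻¹ ω t`, and
`b sin 2φ - a (1 - cos 2φ) = 2 sin φ (b cos φ - a sin φ)`. It therefore vanishes at `x = 2φ`
for the angle `φ` of the point `(a, b) = (A, ε Ld)` of the upper half-plane, which is
`arccos (A / B)` because `B = √(A² + (ε Ld)²)`; the choice of `t_C` makes `x = 2φ`. -/

theorem mul_sin_two_mul_eq_mul_one_sub_cos_two_mul {a b φ : ℝ}
    (h : b * cos φ = a * sin φ) :
    b * sin (2 * φ) = a * (1 - cos (2 * φ)) := by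
  rw [sin_two_mul, cos_two_mul]
  linear_combination (2 * sin φ) * h + 2 * a * sin_sq_add_cos_sq φ

theorem mul_cos_arccos_eq_mul_sin_arccos (a : ℝ) {b : ℝ} (hb : 0 ≤ b) :
    b * cos (arccos (a / √(a ^ 2 + b ^ 2))) = a * sin (arccos (a / √(a ^ 2 + b ^ 2))) := by
  rcases (sqrt_nonneg (a ^ 2 + b ^ 2)).eq_or_lt with hr0 | hr0
  · obtain ⟨rfl, rfl⟩ : a = 0 ∧ b = 0 := by
      have := (sqrt_eq_zero (by positivity)).mp hr0.symm
      constructor <;> nlinarith [sq_nonneg a, sq_nonneg b]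
    simp
  set r := √(a ^ 2 + b ^ 2)
  have hr2 : r ^ 2 = a ^ 2 + b ^ 2 := sq_sqrt (by positivity)
  have habs : |a / r| ≤ 1 := by
    rw [abs_div, abs_of_pos hr0, div_le_one hr0]
    exact abs_le_sqrt (le_add_of_nonneg_right (sq_nonneg b))
  have hsin : sin (arccos (a / r)) = b / r := by
    rw [sin_arccos, ← sqrt_sq (div_nonneg hb hr0.le)]
    congr 1
    field_simp
    linarith
  rw [cos_arccos (abs_le.mp habs).1 (abs_le.mp habs).2, hsin]
  ring

theorem mul_sqrt_eq_sqrt_sq_add_sq {ε : ℝ} (hε : 0 ≤ ε) (c d : ℝ) :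
    ε * √(ε ^ 2 * c ^ 2 + d ^ 2) = √((ε ^ 2 * c) ^ 2 + (ε * d) ^ 2) := by
  rw [← sqrt_sq hε, ← sqrt_mul (sq_nonneg ε), sqrt_sq hε]
  ring_nf

theorem radial_motion_endpoints_general
    (α θd Ld ε : ℝ)
    (hLd : 0 < Ld) (hε : 0 < ε)
    (A B C ω t_C : ℝ) (L : ℝ → ℝ)
    (hA : A = ε ^ 2 * (θd ^ 2 - Real.cos α))
    (hB : B = ε * Real.sqrt (ε ^ 2 * (θd ^ 2 - Real.cos α) ^ 2 + Ld ^ 2))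
    (hC : C = A / B)
    (hωpos : 0 < ω)
    (hL : ∀ t, L t = 1 - ε * Ld * Real.sin (ε⁻¹ * ω * t)
        + ε ^ 2 * (θd ^ 2 - Real.cos α) * (1 - Real.cos (ε⁻¹ * ω * t)))
    (htC : t_C = (2 * ε / ω) * Real.arccos C) :
    L 0 = 1 ∧ L t_C = 1 := by
  refine ⟨by simp [hL], ?_⟩
  have hB' : B = √(A ^ 2 + (ε * Ld) ^ 2) := by
    rw [hB, hA, mul_sqrt_eq_sqrt_sq_add_sq hε.le]
  have hphase : ε⁻¹ * ω * t_C = 2 * arccos C := by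
    rw [htC]
    field_simp
  have hroot := mul_sin_two_mul_eq_mul_one_sub_cos_two_mul
    (mul_cos_arccos_eq_mul_sin_arccos A (mul_nonneg hε.le hLd.le))
  rw [← hB', ← hC, hA] at hroot
  rw [hL, hphase, hroot]
  ring

/-- The approximate radial stance motion has rest length `1` at touch-down
(`t = 0`) and at take-off (`t = t_C`). -/
theorem radial_motion_endpoints
    (α θd Ld ε : ℝ)
    (hα : α ∈ Set.Ioo 0 (Real.pi / 2)) (hLd : 0 < Ld) (hε : 0 < ε)
    (A B C ω t_C : ℝ) (L : ℝ → ℝ)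
    (hA : A = ε ^ 2 * (θd ^ 2 - Real.cos α))
    (hB : B = ε * Real.sqrt (ε ^ 2 * (θd ^ 2 - Real.cos α) ^ 2 + Ld ^ 2))
    (hC : C = A / B)
    (hω : ω = 1 - (1 / 2) * ε ^ 2 * θd ^ 2)
    (hωpos : 0 < ω)
    (hL : ∀ t, L t = 1 - ε * Ld * Real.sin (ε⁻¹ * ω * t)
        + ε ^ 2 * (θd ^ 2 - Real.cos α) * (1 - Real.cos (ε⁻¹ * ω * t)))
    (htC : t_C = (2 * ε / ω) * Real.arccos C) :
    L 0 = 1 ∧ L t_C = 1 :=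
  radial_motion_endpoints_general α θd Ld ε hLd hε A B C ω t_C L hA hB hC hωpos hL htC
end

section
/- Let α ∈ (0, π/2), θ_d ∈ ℝ, L_d > 0, and ε > 0. Define A = ε²(θ_d² − cos α), B = ε·√(ε²(θ_d² − cos α)² + L_d²), C = A/B, ω̃ = 1 − (1/2)ε²θ_d², L(t) = 1 − ε L_d sin(ε⁻¹ ω̃ t) + ε²(θ_d² − cos α)(1 − cos(ε⁻¹ ω̃ t)), and t_C = (2ε/ω̃)·arccos(C), assuming ω̃ > 0. Then the value of L at the midpoint of the contact phase is L(t_C/2) = 1 + A − B; that is, the maximum leg deflection during stance equals ΔL_MAX = B − A. -/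
open Real

/-!
Writing `θ = ε⁻¹ ω t`, the stance solution is `L = 1 + A - (ε L_d sin θ + A cos θ)`, and
`B = √(A² + (ε L_d)²)` is the amplitude of the harmonic `ε L_d sin θ + A cos θ`. Half the
contact time corresponds to `θ = arccos (A / B)`, the phase at which this harmonic attains
its amplitude `B`.
-/

theorem mul_sin_arccos_add_mul_cos_arccos (p : ℝ) {q : ℝ} (hq : 0 ≤ q) :
    q * sin (arccos (p / √(p ^ 2 + q ^ 2))) + p * cos (arccos (p / √(p ^ 2 + q ^ 2)))
      = √(p ^ 2 + q ^ 2) := by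
  set r := √(p ^ 2 + q ^ 2)
  have hr_sq : r ^ 2 = p ^ 2 + q ^ 2 := sq_sqrt (by positivity)
  rcases (sqrt_nonneg (p ^ 2 + q ^ 2)).eq_or_lt' with hr0 | hr_pos
  · have hp : p = 0 := by nlinarith
    have hq0 : q = 0 := by nlinarith
    simp [hp, hq0, r, hr0]
  have hr_ne : r ≠ 0 := hr_pos.ne'
  have hpr : |p / r| ≤ 1 := by
    rw [abs_div, abs_of_pos hr_pos, div_le_one hr_pos]
    exact abs_le_of_sq_le_sq (by nlinarith) hr_pos.le
  have hcos : cos (arccos (p / r)) = p / r := cos_arccos (abs_le.1 hpr).1 (abs_le.1 hpr).2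
  have hsin : sin (arccos (p / r)) = q / r := by
    have h : 1 - (p / r) ^ 2 = (q / r) ^ 2 := by
      field_simp
      linarith
    rw [sin_arccos, h, sqrt_sq (by positivity)]
  rw [hsin, hcos]
  field_simp
  linarith

theorem radial_motion_midpoint_general
    (α θd Ld ε : ℝ)
    (hLd : 0 < Ld) (hε : 0 < ε)
    (A B C ω t_C : ℝ) (L : ℝ → ℝ)
    (hA : A = ε ^ 2 * (θd ^ 2 - Real.cos α))
    (hB : B = ε * Real.sqrt (ε ^ 2 * (θd ^ 2 - Real.cos α) ^ 2 + Ld ^ 2))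
    (hC : C = A / B)
    (hωpos : 0 < ω)
    (hL : ∀ t, L t = 1 - ε * Ld * Real.sin (ε⁻¹ * ω * t)
        + ε ^ 2 * (θd ^ 2 - Real.cos α) * (1 - Real.cos (ε⁻¹ * ω * t)))
    (htC : t_C = (2 * ε / ω) * Real.arccos C) :
    L (t_C / 2) = 1 + A - B ∧ 1 - L (t_C / 2) = B - A := by
  have hB_amp : B = √(A ^ 2 + (ε * Ld) ^ 2) := by
    rw [hB, hA, ← sqrt_sq hε.le, ← sqrt_mul (sq_nonneg ε), sqrt_sq hε.le]
    ring_nf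
  have hphase : ε⁻¹ * ω * (t_C / 2) = arccos C := by
    rw [htC]
    field_simp
  have hL_mid : L (t_C / 2) = 1 + A - (ε * Ld * sin (arccos C) + A * cos (arccos C)) := by
    rw [hL, hphase, hA]
    ring
  have hmax : ε * Ld * sin (arccos C) + A * cos (arccos C) = B := by
    rw [hC, hB_amp]
    exact mul_sin_arccos_add_mul_cos_arccos A (by positivity)
  rw [hL_mid, hmax]
  exact ⟨rfl, by ring⟩

/-- At the midpoint of the contact phase the approximate radial stance motion attains
the value `1 + A - B`, i.e. the maximum leg deflection during stance is `B - A`. -/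
theorem radial_motion_midpoint
    (α θd Ld ε : ℝ)
    (hα : α ∈ Set.Ioo 0 (Real.pi / 2)) (hLd : 0 < Ld) (hε : 0 < ε)
    (A B C ω t_C : ℝ) (L : ℝ → ℝ)
    (hA : A = ε ^ 2 * (θd ^ 2 - Real.cos α))
    (hB : B = ε * Real.sqrt (ε ^ 2 * (θd ^ 2 - Real.cos α) ^ 2 + Ld ^ 2))
    (hC : C = A / B)
    (hω : ω = 1 - (1 / 2) * ε ^ 2 * θd ^ 2)
    (hωpos : 0 < ω)
    (hL : ∀ t, L t = 1 - ε * Ld * Real.sin (ε⁻¹ * ω * t)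
        + ε ^ 2 * (θd ^ 2 - Real.cos α) * (1 - Real.cos (ε⁻¹ * ω * t)))
    (htC : t_C = (2 * ε / ω) * Real.arccos C) :
    L (t_C / 2) = 1 + A - B ∧ 1 - L (t_C / 2) = B - A :=
  radial_motion_midpoint_general α θd Ld ε hLd hε A B C ω t_C L hA hB hC hωpos hL htC
end

section
/- Let α ∈ (0, π/2), θ_d ∈ ℝ, L_d > 0. For ε > 0 define C(ε) = ε(θ_d² − cos α)/√(ε²(θ_d² − cos α)² + L_d²) and Δθ(ε) = 2εθ_d·[arccos(C(ε)) + 2ε L_d (1 − C(ε)²)] − 2ε² sin α · (arccos(C(ε)))². Then, as ε → 0⁺, Δθ(ε) = π θ_d ε + [4θ_d L_d − 2(θ_d/L_d)(θ_d² − cos α) − (1/2)π² sin α]·ε² + O(ε³); that is, the function ε ↦ Δθ(ε) − π θ_d ε − [4θ_d L_d − 2(θ_d/L_d)(θ_d² − cos α) − (1/2)π² sin α]ε² is O(ε³) as ε → 0 from the right. -/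
open Real Filter Asymptotics Topology

/-! With `a = θd² - cos α` and `S = √(ε² a² + Ld²) ≥ Ld`, the identity
`ε a / S - (a / Ld) ε = -(ε a)³ / (S Ld (S + Ld))` gives `C(ε) = (a / Ld) ε + O(ε³)`, and
`arcsin x = x + O(x³)` because `y - sin y = O(y³)`. Hence `arccos C(ε) = π/2 - (a / Ld) ε + O(ε³)`;
substituting this into `Δθ`, what remains after the claimed terms is `ε · O(ε³)`, `ε² C(ε)²` and
`ε² · O(ε)`. -/

theorem isBigO_pow_pow_of_le {𝕜 : Type*} [NormedField 𝕜] {m n : ℕ} (h : m ≤ n) :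
    (fun x : 𝕜 => x ^ n) =O[𝓝 0] fun x => x ^ m := by
  rcases h.eq_or_lt with rfl | h
  · exact isBigO_refl _ _
  · exact (isLittleO_pow_pow h).isBigO

theorem isBigO_mul_pow_of_le {𝕜 : Type*} [NormedField 𝕜] {f g : 𝕜 → 𝕜} {k m n : ℕ}
    (hf : f =O[𝓝 0] (· ^ m)) (hg : g =O[𝓝 0] (· ^ n)) (h : k ≤ m + n) :
    (fun x => f x * g x) =O[𝓝 0] (· ^ k) :=
  (hf.mul hg).trans <| by simpa only [← pow_add] using isBigO_pow_pow_of_le h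

theorem sub_sin_isBigO_cube : (fun y => y - sin y) =O[𝓝 0] (· ^ 3) := by
  refine IsBigO.of_bound 1 ?_
  filter_upwards [Metric.closedBall_mem_nhds (0 : ℝ) one_pos] with y hy
  have hy1 : |y| ≤ 1 := by simpa using hy
  have htaylor := abs_le.1 (sin_bound hy1)
  have hy5 : |y| ^ 5 ≤ |y| ^ 3 := pow_le_pow_of_le_one (abs_nonneg y) hy1 (by norm_num)
  have hy3 := abs_le.1 (le_of_eq (abs_pow y 3))
  rw [norm_eq_abs, norm_eq_abs, one_mul, abs_pow, abs_le]
  constructor <;> linarith [htaylor.1, htaylor.2, hy3.1, hy3.2]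

theorem arcsin_isBigO_id : (fun x => arcsin x) =O[𝓝 0] fun x => x := by
  simpa using (hasDerivAt_arcsin (x := 0) (by norm_num) (by norm_num)).isBigO_sub

theorem arcsin_sub_self_isBigO_cube : (fun x => arcsin x - x) =O[𝓝 0] (· ^ 3) := by
  have hcomp : (fun x => arcsin x - sin (arcsin x)) =O[𝓝 0] (fun x => arcsin x ^ 3) :=
    sub_sin_isBigO_cube.comp_tendsto (continuous_arcsin.tendsto' 0 0 arcsin_zero)
  refine (hcomp.trans (arcsin_isBigO_id.pow 3)).congr' ?_ EventuallyEq.rfl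
  filter_upwards [Icc_mem_nhds neg_one_lt_zero one_pos] with x hx
  rw [sin_arcsin hx.1 hx.2]

theorem linear_isBigO_pow_one {𝕜 : Type*} [NormedField 𝕜] (b : 𝕜) :
    (fun x => b * x) =O[𝓝 0] (· ^ 1) := by
  simpa using (isBigO_refl (fun x : 𝕜 => x) (𝓝 0)).const_mul_left b

theorem ratio_sub_linear_isBigO_cube (a : ℝ) {L : ℝ} (hL : 0 < L) :
    (fun ε => ε * a / √(ε ^ 2 * a ^ 2 + L ^ 2) - a / L * ε) =O[𝓝 0] (· ^ 3) := by
  refine IsBigO.of_bound (|a| ^ 3 / L ^ 3) (Eventually.of_forall fun ε => ?_)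
  set S := √(ε ^ 2 * a ^ 2 + L ^ 2)
  have hLS : L ≤ S := (le_sqrt hL.le (by positivity)).2 (by nlinarith [sq_nonneg (ε * a)])
  have hS2 : S ^ 2 = ε ^ 2 * a ^ 2 + L ^ 2 := sq_sqrt (by positivity)
  have hS : 0 < S := hL.trans_le hLS
  have hid : ε * a / S - a / L * ε = -(ε * a) ^ 3 / (S * L * (S + L)) := by
    field_simp
    linear_combination (-(ε * a)) * hS2
  have hden : L ^ 3 ≤ S * L * (S + L) := by nlinarith [mul_le_mul hLS hLS hL.le hS.le]
  rw [hid, norm_eq_abs, norm_eq_abs, abs_div, abs_neg, abs_pow, abs_pow, abs_mul,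
    abs_of_pos (by positivity : 0 < S * L * (S + L))]
  calc (|ε| * |a|) ^ 3 / (S * L * (S + L)) ≤ (|ε| * |a|) ^ 3 / L ^ 3 :=
        div_le_div_of_nonneg_left (by positivity) (by positivity) hden
    _ = |a| ^ 3 / L ^ 3 * |ε| ^ 3 := by ring

theorem ratio_isBigO_id (a : ℝ) {L : ℝ} (hL : 0 < L) :
    (fun ε => ε * a / √(ε ^ 2 * a ^ 2 + L ^ 2)) =O[𝓝 0] (· ^ 1) := by
  simpa using ((ratio_sub_linear_isBigO_cube a hL).trans
    (isBigO_pow_pow_of_le (by norm_num))).add (linear_isBigO_pow_one (a / L))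

theorem arcsin_ratio_sub_linear_isBigO_cube (a : ℝ) {L : ℝ} (hL : 0 < L) :
    (fun ε => arcsin (ε * a / √(ε ^ 2 * a ^ 2 + L ^ 2)) - a / L * ε) =O[𝓝 0] (· ^ 3) := by
  have hC := ratio_isBigO_id a hL
  have htendsto : Tendsto (fun ε => ε * a / √(ε ^ 2 * a ^ 2 + L ^ 2)) (𝓝 0) (𝓝 0) :=
    hC.trans_tendsto (by simp only [pow_one]; exact tendsto_id)
  have hcube := (arcsin_sub_self_isBigO_cube.comp_tendsto htendsto).trans
    (by simpa only [Function.comp_def, ← pow_mul] using hC.pow 3)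
  simpa using hcube.add (ratio_sub_linear_isBigO_cube a hL)

theorem angle_swept_expansion_general
    (α θd Ld : ℝ)
    (hLd : 0 < Ld)
    (C Δθ : ℝ → ℝ)
    (hC : ∀ ε : ℝ, C ε = ε * (θd ^ 2 - Real.cos α)
        / Real.sqrt (ε ^ 2 * (θd ^ 2 - Real.cos α) ^ 2 + Ld ^ 2))
    (hΔθ : ∀ ε : ℝ, Δθ ε = 2 * ε * θd * (Real.arccos (C ε) + 2 * ε * Ld * (1 - (C ε) ^ 2))
        - 2 * ε ^ 2 * Real.sin α * (Real.arccos (C ε)) ^ 2) :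
    (fun ε : ℝ => Δθ ε - Real.pi * θd * ε
        - (4 * θd * Ld - 2 * (θd / Ld) * (θd ^ 2 - Real.cos α)
            - (1 / 2) * Real.pi ^ 2 * Real.sin α) * ε ^ 2)
      =O[nhdsWithin 0 (Set.Ioi 0)] (fun ε : ℝ => ε ^ 3) := by
  set a := θd ^ 2 - cos α
  set v := fun ε => arcsin (C ε)
  have hC1 : C =O[𝓝 0] (· ^ 1) := by rw [funext hC]; exact ratio_isBigO_id a hLd
  have hu : (fun ε => v ε - a / Ld * ε) =O[𝓝 0] (· ^ 3) := by
    simpa only [v, hC] using arcsin_ratio_sub_linear_isBigO_cube a hLd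
  have hv : v =O[𝓝 0] (· ^ 1) := by
    simpa using (hu.trans (isBigO_pow_pow_of_le (by norm_num))).add
      (linear_isBigO_pow_one (a / Ld))
  have hres : (fun ε => Δθ ε - π * θd * ε - (4 * θd * Ld - 2 * (θd / Ld) * a
      - 1 / 2 * π ^ 2 * sin α) * ε ^ 2) = fun ε => -2 * θd * (ε * (v ε - a / Ld * ε))
        - 4 * θd * Ld * (ε ^ 2 * C ε ^ 2) + 2 * sin α * (ε ^ 2 * (π * v ε - v ε ^ 2)) := by
    ext ε
    rw [hΔθ, arccos_eq_pi_div_two_sub_arcsin]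
    ring
  have hlin : (fun ε : ℝ => ε) =O[𝓝 0] (· ^ 1) := by simpa using linear_isBigO_pow_one (1 : ℝ)
  have hC2 : (fun ε => C ε ^ 2) =O[𝓝 0] (· ^ 2) := by simpa only [← pow_mul] using hC1.pow 2
  have hv2 : (fun ε => v ε ^ 2) =O[𝓝 0] (· ^ 1) :=
    (by simpa only [← pow_mul] using hv.pow 2 : (fun ε => v ε ^ 2) =O[𝓝 0] (· ^ 2)).trans
      (isBigO_pow_pow_of_le (by norm_num))
  rw [hres]
  refine IsBigO.mono ?_ nhdsWithin_le_nhds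
  refine ((IsBigO.const_mul_left ?_ _).sub (IsBigO.const_mul_left ?_ _)).add
    (IsBigO.const_mul_left ?_ _)
  · exact isBigO_mul_pow_of_le hlin hu (by norm_num)
  · exact isBigO_mul_pow_of_le (isBigO_refl _ _) hC2 (by norm_num)
  · exact isBigO_mul_pow_of_le (isBigO_refl _ _) ((hv.const_mul_left π).sub hv2) (by norm_num)

/-- Second-order Taylor expansion of the angle swept during stance as `ε → 0⁺`. -/
theorem angle_swept_expansion
    (α θd Ld : ℝ)
    (hα : α ∈ Set.Ioo 0 (Real.pi / 2)) (hLd : 0 < Ld)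
    (C Δθ : ℝ → ℝ)
    (hC : ∀ ε : ℝ, C ε = ε * (θd ^ 2 - Real.cos α)
        / Real.sqrt (ε ^ 2 * (θd ^ 2 - Real.cos α) ^ 2 + Ld ^ 2))
    (hΔθ : ∀ ε : ℝ, Δθ ε = 2 * ε * θd * (Real.arccos (C ε) + 2 * ε * Ld * (1 - (C ε) ^ 2))
        - 2 * ε ^ 2 * Real.sin α * (Real.arccos (C ε)) ^ 2) :
    (fun ε : ℝ => Δθ ε - Real.pi * θd * ε
        - (4 * θd * Ld - 2 * (θd / Ld) * (θd ^ 2 - Real.cos α)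
            - (1 / 2) * Real.pi ^ 2 * Real.sin α) * ε ^ 2)
      =O[nhdsWithin 0 (Set.Ioi 0)] (fun ε : ℝ => ε ^ 3) :=
  angle_swept_expansion_general α θd Ld hLd C Δθ hC hΔθ
end

section
/- (Existence of symmetric solutions.) Let α ∈ (0, π/2), θ_d* > 0, and E_s > θ_d*²/(2cos²α) + cos α. Set L_d* = √(2E_s − θ_d*² − 2cos α) and Y* = cos α + (1/2)(θ_d* sin α − L_d* cos α)². Then cos α ≤ Y* ≤ E_s and the touch-down map at apex height Y* returns exactly (θ_d*, L_d*): θ_d* = √2·[cos α·√(E_s − Y*) − sin α·√(Y* − cos α)] and L_d* = √2·[sin α·√(E_s − Y*) + cos α·√(Y* − cos α)]. -/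
/-!
Write `c = cos α`, `s = sin α`. Since `θd² + Ld² = 2 (Es - c)`, the touch-down map is the
rotation by `α` of `(√(2 (Es - Y)), √(2 (Y - c)))`, so its inverse sends `(θd, Ld)` to
`(θd c + Ld s, Ld c - θd s)`. The choice of `Y*` makes the second coordinate fit, and the
energy bound on `Es` is exactly what makes `Ld c - θd s` positive, so the square roots
recover these coordinates without a sign flip.
-/

open Real

lemma sqrt_sq_div_two {x : ℝ} (hx : 0 ≤ x) : √(x ^ 2 / 2) = x / √2 := by
  rw [sqrt_div' _ (by norm_num), sqrt_sq hx]

lemma sq_lt_two_mul_sub_mul_sq_cos {θ E c : ℝ} (hc : 0 < c)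
    (hE : E > θ ^ 2 / (2 * c ^ 2) + c) : θ ^ 2 < (2 * E - 2 * c) * c ^ 2 := by
  have h : θ ^ 2 / (2 * c ^ 2) < E - c := by linarith
  rw [div_lt_iff₀ (by positivity)] at h
  linarith

lemma mul_sin_lt_sqrt_mul_cos {α θ E : ℝ} (hc : 0 < cos α)
    (hE : E > θ ^ 2 / (2 * cos α ^ 2) + cos α) :
    0 < 2 * E - θ ^ 2 - 2 * cos α ∧ θ * sin α < √(2 * E - θ ^ 2 - 2 * cos α) * cos α := by
  have hθ := sq_lt_two_mul_sub_mul_sq_cos hc hE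
  have hpos : 0 < 2 * E - θ ^ 2 - 2 * cos α := by
    nlinarith [sq_nonneg θ, cos_sq_le_one α, sin_sq_add_cos_sq α]
  refine ⟨hpos, lt_of_pow_lt_pow_left₀ 2 (by positivity) ?_⟩
  rw [mul_pow, mul_pow, sq_sqrt hpos.le]
  nlinarith [sin_sq_add_cos_sq α]

/-- Existence of symmetric solutions: above the minimum energy, the apex height `Y*`
lies between the landing height and the system energy, and the touch-down map at `Y*`
returns exactly the prescribed touch-down state `(θ_d*, L_d*)`. -/
theorem existence_symmetric_solutions
    (α θd Es : ℝ)
    (hα : α ∈ Set.Ioo 0 (Real.pi / 2)) (hθd : 0 < θd)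
    (hE : Es > θd ^ 2 / (2 * (Real.cos α) ^ 2) + Real.cos α)
    (Ld Y : ℝ)
    (hLd : Ld = Real.sqrt (2 * Es - θd ^ 2 - 2 * Real.cos α))
    (hY : Y = Real.cos α + (1 / 2) * (θd * Real.sin α - Ld * Real.cos α) ^ 2) :
    Real.cos α ≤ Y ∧ Y ≤ Es ∧
      θd = Real.sqrt 2 * (Real.cos α * Real.sqrt (Es - Y)
          - Real.sin α * Real.sqrt (Y - Real.cos α)) ∧
      Ld = Real.sqrt 2 * (Real.sin α * Real.sqrt (Es - Y)
          + Real.cos α * Real.sqrt (Y - Real.cos α)) := by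
  obtain ⟨hα0, hαπ⟩ := hα
  have hc : 0 < cos α := cos_pos_of_mem_Ioo ⟨by linarith [pi_pos], hαπ⟩
  have hs : 0 < sin α := sin_pos_of_pos_of_lt_pi hα0 (by linarith [pi_pos])
  have hpyth := sin_sq_add_cos_sq α
  obtain ⟨hpos, hgap⟩ := mul_sin_lt_sqrt_mul_cos hc hE
  rw [← hLd] at hgap
  have hLd2 : Ld ^ 2 = 2 * Es - θd ^ 2 - 2 * cos α := hLd ▸ sq_sqrt hpos.le
  have hYc : Y - cos α = (Ld * cos α - θd * sin α) ^ 2 / 2 := by rw [hY]; ring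
  have hEY : Es - Y = (θd * cos α + Ld * sin α) ^ 2 / 2 := by
    rw [hY]; linear_combination (-(1 / 2) * hLd2 - (θd ^ 2 + Ld ^ 2) / 2 * hpyth)
  have hLd0 : 0 ≤ Ld := hLd ▸ sqrt_nonneg _
  rw [hEY, hYc, sqrt_sq_div_two (by positivity), sqrt_sq_div_two (by linarith)]
  refine ⟨by linarith [hYc, sq_nonneg (Ld * cos α - θd * sin α)],
    by linarith [hEY, sq_nonneg (θd * cos α + Ld * sin α)], ?_, ?_⟩
  · field_simp
    linear_combination (-θd) * hpyth
  · field_simp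
    linear_combination (-Ld) * hpyth
end

section
/- Let α ∈ (0, π/2), E_s ∈ ℝ, Y* ∈ ℝ with cos α < Y* < E_s, and let Δθ : ℝ → ℝ satisfy Δθ(Y*) = 2α and have derivative d at Y*. Define f(Y) = cos(α − Δθ(Y)) + [sin(2α − Δθ(Y))·√(E_s − Y) + cos(2α − Δθ(Y))·√(Y − cos α)]². Then f is differentiable at Y* with f'(Y*) = 1 − [sin α + 2√((Y* − cos α)(E_s − Y*))]·d. -/
open Real

/-!
At a symmetric fixed point the stance angle `2α - Δθ` vanishes, so the bracket
`sin(2α - Δθ) √(E_s - Y) + cos(2α - Δθ) √(Y - cos α)` equals `√(Y - cos α)` there and,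
to first order, only rotates by `-d`. Its square therefore has derivative
`2 √(Y - cos α) (-d √(E_s - Y)) + 1`, where the `1` is the derivative of `Y - cos α`;
the term `cos(α - Δθ)` contributes `-sin α · d`.
-/

theorem hasDerivAt_sin_mul_add_cos_mul_of_eq_zero {u a b : ℝ → ℝ} {u' b' y : ℝ}
    (hu : HasDerivAt u u' y) (ha : DifferentiableAt ℝ a y) (hb : HasDerivAt b b' y)
    (hu₀ : u y = 0) :
    HasDerivAt (fun z => sin (u z) * a z + cos (u z) * b z) (u' * a y + b') y := by
  refine ((hu.sin.mul ha.hasDerivAt).add (hu.cos.mul hb)).congr_deriv ?_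
  simp only [hu₀, sin_zero, cos_zero]
  ring

theorem apex_return_map_deriv_general
    (α Es Y d : ℝ) (Δθ : ℝ → ℝ)
    (hY₁ : Real.cos α < Y) (hY₂ : Y < Es)
    (hΔθY : Δθ Y = 2 * α)
    (hd : HasDerivAt Δθ d Y) :
    HasDerivAt
      (fun Z => Real.cos (α - Δθ Z)
        + (Real.sin (2 * α - Δθ Z) * Real.sqrt (Es - Z)
           + Real.cos (2 * α - Δθ Z) * Real.sqrt (Z - Real.cos α)) ^ 2)
      (1 - (Real.sin α + 2 * Real.sqrt ((Y - Real.cos α) * (Es - Y))) * d) Y := by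
  have hc : 0 < Y - cos α := sub_pos.2 hY₁
  have hu₀ : 2 * α - Δθ Y = 0 := by rw [hΔθY, sub_self]
  have hcos : HasDerivAt (fun Z => cos (α - Δθ Z)) (-sin α * d) Y := by
    refine (hd.const_sub α).cos.congr_deriv ?_
    rw [hΔθY, show α - 2 * α = -α by ring, sin_neg]
    ring
  have ha : DifferentiableAt ℝ (fun Z => √(Es - Z)) Y :=
    (differentiableAt_id.const_sub Es).sqrt (sub_pos.2 hY₂).ne'
  have hb : HasDerivAt (fun Z => √(Z - cos α)) (1 / (2 * √(Y - cos α))) Y :=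
    ((hasDerivAt_id Y).sub_const (cos α)).sqrt hc.ne'
  have hbracket := hasDerivAt_sin_mul_add_cos_mul_of_eq_zero (hd.const_sub (2 * α)) ha hb hu₀
  refine (hcos.add (hbracket.pow 2)).congr_deriv ?_
  simp only [hu₀, sin_zero, cos_zero, sqrt_mul hc.le]
  field_simp
  ring

/-- Derivative of the apex return map at a symmetric fixed point. -/
theorem apex_return_map_deriv
    (α Es Y d : ℝ) (Δθ : ℝ → ℝ)
    (hα : α ∈ Set.Ioo 0 (Real.pi / 2))
    (hY₁ : Real.cos α < Y) (hY₂ : Y < Es)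
    (hΔθY : Δθ Y = 2 * α)
    (hd : HasDerivAt Δθ d Y) :
    HasDerivAt
      (fun Z => Real.cos (α - Δθ Z)
        + (Real.sin (2 * α - Δθ Z) * Real.sqrt (Es - Z)
           + Real.cos (2 * α - Δθ Z) * Real.sqrt (Z - Real.cos α)) ^ 2)
      (1 - (Real.sin α + 2 * Real.sqrt ((Y - Real.cos α) * (Es - Y))) * d) Y :=
  apex_return_map_deriv_general α Es Y d Δθ hY₁ hY₂ hΔθY hd
end

section
/- (Stability of symmetric solutions.) Let α ∈ (0, π/2), E_s ∈ ℝ, Y* ∈ ℝ with cos α < Y* < E_s, set D = 2√((Y* − cos α)(E_s − Y*)), and let Δθ : ℝ → ℝ satisfy Δθ(Y*) = 2α and have derivative d at Y*. Define the apex return map f(Y) = cos(α − Δθ(Y)) + [sin(2α − Δθ(Y))·√(E_s − Y) + cos(2α − Δθ(Y))·√(Y − cos α)]². If d ∈ (0, 2/(sin α + D)), then Y* is a fixed point of f, f is differentiable at Y*, and |f'(Y*)| < 1, i.e., Y* is a stable fixed point. -/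
open Real

/-! At a symmetric fixed point the sine factor in the bracket vanishes and the cosine factor
equals `1`, so the apex return map returns `cos α + (Y* - cos α) = Y*`, and by the product rule
its derivative there is `1 - d (sin α + D)`: the term `-d sin α` comes from `cos (α - Δθ)`, and
`1 - d D` from differentiating the square of the bracket, whose value at `Y*` is
`√(Y* - cos α)`. The condition `0 < d < 2 / (sin α + D)` places this derivative in `(-1, 1)`. -/

noncomputable section

def apexReturnMap (α Es : ℝ) (Δθ : ℝ → ℝ) (Z : ℝ) : ℝ :=
  cos (α - Δθ Z) + (sin (2 * α - Δθ Z) * √(Es - Z) + cos (2 * α - Δθ Z) * √(Z - cos α)) ^ 2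

theorem apexReturnMap_eq_self_of_symmetric {α Es Y : ℝ} {Δθ : ℝ → ℝ} (hY : cos α ≤ Y)
    (hΔθY : Δθ Y = 2 * α) : apexReturnMap α Es Δθ Y = Y := by
  have hsq : √(Y - cos α) ^ 2 = Y - cos α := sq_sqrt (sub_nonneg.mpr hY)
  simp only [apexReturnMap, hΔθY, sub_self, sin_zero, cos_zero, zero_mul, one_mul, zero_add,
    hsq, show α - 2 * α = -α by ring, cos_neg]
  ring

theorem hasDerivAt_sin_mul_add_cos_mul_of_eq_zero_s13 {φ u v : ℝ → ℝ} {φ' u' v' x : ℝ}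
    (hφ : HasDerivAt φ φ' x) (hu : HasDerivAt u u' x) (hv : HasDerivAt v v' x) (hφx : φ x = 0) :
    HasDerivAt (fun y => sin (φ y) * u y + cos (φ y) * v y) (φ' * u x + v') x := by
  have hsin := (hasDerivAt_sin (φ x)).comp x hφ
  have hcos := (hasDerivAt_cos (φ x)).comp x hφ
  refine ((hsin.mul hu).add (hcos.mul hv)).congr_deriv ?_
  simp [hφx]

theorem hasDerivAt_apexReturnMap_of_symmetric {α Es Y d : ℝ} {Δθ : ℝ → ℝ}
    (hY₁ : cos α < Y) (hY₂ : Y < Es) (hΔθY : Δθ Y = 2 * α) (hd : HasDerivAt Δθ d Y) :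
    HasDerivAt (apexReturnMap α Es Δθ)
      (1 - d * (sin α + 2 * √((Y - cos α) * (Es - Y)))) Y := by
  have hEs : 0 < Es - Y := sub_pos.mpr hY₂
  have hYc : 0 < Y - cos α := sub_pos.mpr hY₁
  have ha : HasDerivAt (fun Z => √(Es - Z)) (1 / (2 * √(Es - Y)) * -1) Y :=
    (hasDerivAt_sqrt hEs.ne').comp Y ((hasDerivAt_id Y).const_sub Es)
  have hb : HasDerivAt (fun Z => √(Z - cos α)) (1 / (2 * √(Y - cos α)) * 1) Y :=
    (hasDerivAt_sqrt hYc.ne').comp Y ((hasDerivAt_id Y).sub_const _)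
  have hbracket := hasDerivAt_sin_mul_add_cos_mul_of_eq_zero_s13 (hd.const_sub (2 * α)) ha hb
    (by rw [hΔθY, sub_self])
  have hbracketY : sin (2 * α - Δθ Y) * √(Es - Y) + cos (2 * α - Δθ Y) * √(Y - cos α)
      = √(Y - cos α) := by
    simp [hΔθY]
  have hcos := (hasDerivAt_cos (α - Δθ Y)).comp Y (hd.const_sub α)
  refine (hcos.add (hbracket.pow 2)).congr_deriv ?_
  rw [hbracketY, hΔθY, sqrt_mul hYc.le, show α - 2 * α = -α by ring, sin_neg]
  field_simp
  ring

theorem abs_one_sub_mul_lt_one_of_mem_Ioo {d s : ℝ} (hd : d ∈ Set.Ioo 0 (2 / s)) :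
    |1 - d * s| < 1 := by
  obtain ⟨hd₀, hd₂⟩ := hd
  have hs : 0 < s := by
    rcases div_pos_iff.mp (hd₀.trans hd₂) with ⟨-, hs⟩ | ⟨h, -⟩
    · exact hs
    · norm_num at h
  have hds : d * s < 2 := (lt_div_iff₀ hs).mp hd₂
  rw [abs_lt]
  constructor <;> nlinarith

end

theorem stability_symmetric_solutions_general
    (α Es Y d : ℝ) (Δθ : ℝ → ℝ)
    (hY₁ : Real.cos α < Y) (hY₂ : Y < Es)
    (D : ℝ) (hD : D = 2 * Real.sqrt ((Y - Real.cos α) * (Es - Y)))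
    (hΔθY : Δθ Y = 2 * α)
    (hd : HasDerivAt Δθ d Y)
    (hdmem : d ∈ Set.Ioo 0 (2 / (Real.sin α + D)))
    (f : ℝ → ℝ)
    (hf : ∀ Z, f Z = Real.cos (α - Δθ Z)
        + (Real.sin (2 * α - Δθ Z) * Real.sqrt (Es - Z)
           + Real.cos (2 * α - Δθ Z) * Real.sqrt (Z - Real.cos α)) ^ 2) :
    f Y = Y ∧ DifferentiableAt ℝ f Y ∧ |deriv f Y| < 1 := by
  obtain rfl : f = apexReturnMap α Es Δθ := funext hf
  have hderiv := hasDerivAt_apexReturnMap_of_symmetric hY₁ hY₂ hΔθY hd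
  rw [← hD] at hderiv
  exact ⟨apexReturnMap_eq_self_of_symmetric hY₁.le hΔθY, hderiv.differentiableAt,
    hderiv.deriv ▸ abs_one_sub_mul_lt_one_of_mem_Ioo hdmem⟩

/-- Stability of symmetric solutions: if the derivative of the swept angle at the
symmetric fixed point lies in `(0, 2/(sin α + D))`, then `Y*` is a stable fixed point
of the apex return map. -/
theorem stability_symmetric_solutions
    (α Es Y d : ℝ) (Δθ : ℝ → ℝ)
    (hα : α ∈ Set.Ioo 0 (Real.pi / 2))
    (hY₁ : Real.cos α < Y) (hY₂ : Y < Es)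
    (D : ℝ) (hD : D = 2 * Real.sqrt ((Y - Real.cos α) * (Es - Y)))
    (hΔθY : Δθ Y = 2 * α)
    (hd : HasDerivAt Δθ d Y)
    (hdmem : d ∈ Set.Ioo 0 (2 / (Real.sin α + D)))
    (f : ℝ → ℝ)
    (hf : ∀ Z, f Z = Real.cos (α - Δθ Z)
        + (Real.sin (2 * α - Δθ Z) * Real.sqrt (Es - Z)
           + Real.cos (2 * α - Δθ Z) * Real.sqrt (Z - Real.cos α)) ^ 2) :
    f Y = Y ∧ DifferentiableAt ℝ f Y ∧ |deriv f Y| < 1 :=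
  stability_symmetric_solutions_general α Es Y d Δθ hY₁ hY₂ D hD hΔθY hd hdmem f hf
end

section
/- Let α ∈ (0, π/2), θ_d* > 0, and E_s > θ_d*²/(2cos²α) + cos α. Set L_d* = √(2E_s − θ_d*² − 2cos α) and Y* = cos α + (1/2)(θ_d* sin α − L_d* cos α)². Then 2√((Y* − cos α)(E_s − Y*)) = θ_d*·cos(2α)·√(2E_s − θ_d*² − 2cos α) + sin(2α)·(E_s − θ_d*² − cos α). -/
open Real

/-!
Rotating the touch-down velocity `(L_d*, θ_d*)` by `α` gives the components
`L_d* cos α − θ_d* sin α` and `L_d* sin α + θ_d* cos α`, whose squares add up to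
`L_d*² + θ_d*² = 2 (E_s − cos α)`. Hence `Y* − cos α` and `E_s − Y*` are half the squares of
these two components, `D` is their product, and the double-angle formulas turn that product
into the closed form. The energy bound makes the first component positive, so no absolute
value appears.
-/

namespace SpringMass

lemma rotation_sq_add_sq {s c : ℝ} (h : s ^ 2 + c ^ 2 = 1) (x y : ℝ) :
    (x * c - y * s) ^ 2 + (x * s + y * c) ^ 2 = x ^ 2 + y ^ 2 := by
  linear_combination (x ^ 2 + y ^ 2) * h

lemma mul_sin_lt_mul_cos {s c θ L : ℝ} (hc : 0 ≤ c) (h : s ^ 2 + c ^ 2 = 1) (hL : 0 ≤ L)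
    (hθ : θ ^ 2 < c ^ 2 * (L ^ 2 + θ ^ 2)) : θ * s < L * c := by
  have hsq : (θ * s) ^ 2 < (L * c) ^ 2 := by linear_combination hθ + θ ^ 2 * h
  exact (le_abs_self _).trans_lt (abs_lt_of_sq_lt_sq hsq (by positivity))

lemma apex_factors_eq {s c θ L E Y : ℝ} (h : s ^ 2 + c ^ 2 = 1)
    (hE : E = (L ^ 2 + θ ^ 2) / 2 + c) (hY : Y = c + 1 / 2 * (θ * s - L * c) ^ 2) :
    (Y - c) * (E - Y) = (L * c - θ * s) ^ 2 / 2 * ((L * s + θ * c) ^ 2 / 2) := by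
  subst hE hY
  linear_combination -(L * c - θ * s) ^ 2 / 4 * rotation_sq_add_sq h L θ

lemma two_mul_sqrt_half_sq_mul_half_sq {a b : ℝ} (ha : 0 ≤ a) (hb : 0 ≤ b) :
    2 * √(a ^ 2 / 2 * (b ^ 2 / 2)) = a * b := by
  rw [show a ^ 2 / 2 * (b ^ 2 / 2) = (a * b / 2) ^ 2 by ring, sqrt_sq (by positivity)]
  ring

lemma rotation_product_eq (α L θ : ℝ) :
    (L * cos α - θ * sin α) * (L * sin α + θ * cos α)
      = θ * cos (2 * α) * L + sin (2 * α) * ((L ^ 2 - θ ^ 2) / 2) := by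
  rw [cos_two_mul, sin_two_mul]
  linear_combination (-θ * L) * sin_sq_add_cos_sq α

end SpringMass

/-- Closed form of the quantity `D(α, E_s, θ_d*) = 2√((Y* − cos α)(E_s − Y*))`
appearing in the stability condition. -/
theorem stability_D_formula
    (α θd Es : ℝ)
    (hα : α ∈ Set.Ioo 0 (Real.pi / 2)) (hθd : 0 < θd)
    (hE : Es > θd ^ 2 / (2 * (Real.cos α) ^ 2) + Real.cos α)
    (Ld Y : ℝ)
    (hLd : Ld = Real.sqrt (2 * Es - θd ^ 2 - 2 * Real.cos α))
    (hY : Y = Real.cos α + (1 / 2) * (θd * Real.sin α - Ld * Real.cos α) ^ 2) :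
    2 * Real.sqrt ((Y - Real.cos α) * (Es - Y))
      = θd * Real.cos (2 * α) * Real.sqrt (2 * Es - θd ^ 2 - 2 * Real.cos α)
        + Real.sin (2 * α) * (Es - θd ^ 2 - Real.cos α) := by
  obtain ⟨hα0, hα1⟩ := hα
  have hc : 0 < cos α := cos_pos_of_mem_Ioo ⟨by linarith [pi_pos], hα1⟩
  have hs : 0 < sin α := sin_pos_of_pos_of_lt_pi hα0 (by linarith [pi_pos])
  have hθ : θd ^ 2 < (Es - cos α) * (2 * cos α ^ 2) :=
    (div_lt_iff₀ (by positivity)).1 (lt_sub_iff_add_lt.2 hE)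
  have hL2 : Ld ^ 2 = 2 * Es - θd ^ 2 - 2 * cos α := by
    rw [hLd, sq_sqrt]
    nlinarith [cos_sq_le_one α]
  have hEs : Es = (Ld ^ 2 + θd ^ 2) / 2 + cos α := by linarith
  have hL : 0 ≤ Ld := hLd ▸ sqrt_nonneg _
  have hvert : θd * sin α < Ld * cos α :=
    SpringMass.mul_sin_lt_mul_cos hc.le (sin_sq_add_cos_sq α) hL (by rw [hEs] at hθ; linarith)
  rw [SpringMass.apex_factors_eq (sin_sq_add_cos_sq α) hEs hY,
    SpringMass.two_mul_sqrt_half_sq_mul_half_sq (by linarith) (by positivity),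
    SpringMass.rotation_product_eq, ← hLd, hEs]
  ring
end
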